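/- For ν > 1 and μ ∈ ℝ, E_{μ,ν}[X₊] > μ, where X₊ is the Student t variate with location μ and ν degrees of freedom truncated to the positive reals. -/
import Mathlib

open MeasureTheory Real Set

noncomputable def C (ν : ℝ) : ℝ := Real.Gamma ((ν + 1) / 2) / (Real.Gamma (ν / 2) * Real.sqrt (π * ν))

lemma C_pos {ν : ℝ} (hν : 1 < ν) : 0 < C ν := by
  have h1 : 0 < Real.Gamma ((ν + 1) / 2) := Real.Gamma_pos_of_pos (by linarith)
  have h2 : 0 < Real.Gamma (ν / 2) := Real.Gamma_pos_of_pos (by linarith)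
  have h3 : 0 < Real.sqrt (π * ν) :=
    Real.sqrt_pos.mpr (mul_pos Real.pi_pos (by linarith))
  exact div_pos h1 (mul_pos h2 h3)

lemma base_pos {ν : ℝ} (hν : 1 < ν) (y : ℝ) : 0 < 1 + y ^ 2 / ν := by
  have hν0 : (0:ℝ) < ν := by linarith
  positivity

lemma g_le {ν : ℝ} (hν : 1 < ν) (y : ℝ) :
    (1 + y ^ 2 / ν) ^ (-(ν + 1) / 2) ≤ ν ^ ((ν + 1) / 2) * (1 + y ^ 2) ^ (-(ν + 1) / 2) := by
  have hν0 : (0:ℝ) < ν := by linarith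
  have h1 : (0:ℝ) < (1 + y ^ 2) / ν := by positivity
  have hbase : (1 + y ^ 2) / ν ≤ 1 + y ^ 2 / ν := by
    rw [add_div]
    have : 1 / ν ≤ 1 := by
      rw [div_le_one hν0]; linarith
    linarith
  have h2 := Real.rpow_le_rpow_of_nonpos h1 hbase (by linarith : -(ν + 1) / 2 ≤ 0)
  refine h2.trans_eq ?_
  rw [Real.div_rpow (by positivity) hν0.le, div_eq_mul_inv, ← Real.rpow_neg hν0.le, mul_comm]
  congr 1
  ring

lemma int_one_add_sq {r : ℝ} (hr : 1 < r) :
    Integrable (fun y : ℝ => (1 + y ^ 2) ^ (-r / 2)) := by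
  have h := integrable_rpow_neg_one_add_norm_sq (E := ℝ) (μ := volume) (r := r)
    (by simpa using hr)
  simpa [Real.norm_eq_abs, sq_abs] using h

lemma g_meas {ν c : ℝ} : Measurable (fun y : ℝ => (1 + y ^ 2 / ν) ^ (c : ℝ)) := by
  fun_prop

lemma g_int {ν : ℝ} (hν : 1 < ν) :
    Integrable (fun y : ℝ => (1 + y ^ 2 / ν) ^ (-(ν + 1) / 2)) := by
  have h := (int_one_add_sq (r := ν + 1) (by linarith)).const_mul (ν ^ ((ν + 1) / 2))
  refine h.mono' (g_meas.aestronglyMeasurable) (Filter.Eventually.of_forall fun y => ?_)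
  rw [Real.norm_eq_abs, abs_of_nonneg (Real.rpow_nonneg (base_pos hν y).le _)]
  exact g_le hν y

lemma yg_int {ν : ℝ} (hν : 1 < ν) :
    Integrable (fun y : ℝ => y * (1 + y ^ 2 / ν) ^ (-(ν + 1) / 2)) := by
  have h := (int_one_add_sq (r := ν) hν).const_mul (ν ^ ((ν + 1) / 2))
  refine h.mono' (measurable_id.mul g_meas).aestronglyMeasurable
    (Filter.Eventually.of_forall fun y => ?_)
  rw [Real.norm_eq_abs, abs_mul, abs_of_nonneg (Real.rpow_nonneg (base_pos hν y).le _)]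
  have h1 : |y| ≤ (1 + y ^ 2) ^ ((1:ℝ) / 2) := by
    rw [← Real.sqrt_eq_rpow]
    exact (Real.le_sqrt (abs_nonneg y) (by positivity)).mpr (by nlinarith [sq_abs y])
  calc |y| * (1 + y ^ 2 / ν) ^ (-(ν + 1) / 2)
      ≤ (1 + y ^ 2) ^ ((1:ℝ) / 2) * (ν ^ ((ν + 1) / 2) * (1 + y ^ 2) ^ (-(ν + 1) / 2)) := by
        have hb : (0:ℝ) < 1 + y ^ 2 := by positivity
        exact mul_le_mul h1 (g_le hν y) (Real.rpow_nonneg (base_pos hν y).le _) (by positivity)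
    _ = ν ^ ((ν + 1) / 2) * (1 + y ^ 2) ^ (-ν / 2) := by
        rw [← mul_assoc, mul_comm ((1 + y ^ 2) ^ ((1:ℝ) / 2)), mul_assoc,
          ← Real.rpow_add (by positivity)]
        congr 1
        ring

lemma pos_part {ν : ℝ} (hν : 1 < ν) {c : ℝ} (hc : 0 ≤ c) :
    0 < ∫ y in Ioi c, y * (1 + y ^ 2 / ν) ^ (-(ν + 1) / 2) := by
  rw [setIntegral_pos_iff_support_of_nonneg_ae
    ((ae_restrict_iff' measurableSet_Ioi).mpr (ae_of_all _ fun y hy => by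
      have hy0 : 0 < y := lt_of_le_of_lt hc hy
      have := Real.rpow_pos_of_pos (base_pos hν y) (-(ν + 1) / 2)
      positivity)) ((yg_int hν).integrableOn)]
  have hsub : Ioi c ⊆ Function.support (fun y : ℝ => y * (1 + y ^ 2 / ν) ^ (-(ν + 1) / 2)) ∩ Ioi c := by
    intro y hy
    have hy0 : 0 < y := lt_of_le_of_lt hc hy
    refine ⟨?_, hy⟩
    have := Real.rpow_pos_of_pos (base_pos hν y) (-(ν + 1) / 2)
    exact (by positivity : (0:ℝ) < y * (1 + y ^ 2 / ν) ^ (-(ν + 1) / 2)).ne'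
  calc (0 : ENNReal) < volume (Ioi c) := by simp [Real.volume_Ioi]
    _ ≤ _ := measure_mono hsub

lemma odd_zero {ν : ℝ} (a : ℝ) :
    ∫ x in (-a)..a, x * (1 + x ^ 2 / ν) ^ (-(ν + 1) / 2) = 0 := by
  have h := intervalIntegral.integral_comp_neg (a := -a) (b := a)
    (f := fun x : ℝ => x * (1 + x ^ 2 / ν) ^ (-(ν + 1) / 2))
  simp only [neg_neg] at h
  have h2 : ∀ x : ℝ, (-x) * (1 + (-x) ^ 2 / ν) ^ (-(ν + 1) / 2)
      = -(x * (1 + x ^ 2 / ν) ^ (-(ν + 1) / 2)) := fun x => by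
    rw [neg_sq]; ring
  rw [show (fun x : ℝ => (-x) * (1 + (-x) ^ 2 / ν) ^ (-(ν + 1) / 2))
      = fun x : ℝ => -(x * (1 + x ^ 2 / ν) ^ (-(ν + 1) / 2)) from funext h2] at h
  rw [intervalIntegral.integral_neg] at h
  linarith

lemma shift_int (h : ℝ → ℝ) (μ : ℝ) :
    ∫ x in Ioi (0:ℝ), h (x - μ) = ∫ y in Ioi (-μ), h y := by
  have h0 := (measurePreserving_add_right volume μ).setIntegral_preimage_emb
    (measurableEmbedding_addRight μ) (fun x => h (x - μ)) (Ioi 0)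
  simp only [add_sub_cancel_right] at h0
  rw [show ((· + μ) ⁻¹' Ioi (0:ℝ)) = Ioi (-μ) by
    ext x; simp only [mem_preimage, mem_Ioi]; constructor <;> intro <;> linarith] at h0
  exact h0.symm

lemma key_pos {ν : ℝ} (hν : 1 < ν) (μ : ℝ) :
    0 < ∫ y in Ioi (-μ), y * (1 + y ^ 2 / ν) ^ (-(ν + 1) / 2) := by
  rcases lt_or_ge μ 0 with hμ | hμ
  · exact pos_part hν (by linarith)
  · have hsplit : Ioc (-μ) μ ∪ Ioi μ = Ioi (-μ) := Ioc_union_Ioi_eq_Ioi (by linarith)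
    have hint : IntegrableOn (fun y : ℝ => y * (1 + y ^ 2 / ν) ^ (-(ν + 1) / 2))
        (Ioc (-μ) μ) := (yg_int hν).integrableOn
    have hint2 : IntegrableOn (fun y : ℝ => y * (1 + y ^ 2 / ν) ^ (-(ν + 1) / 2))
        (Ioi μ) := (yg_int hν).integrableOn
    rw [← hsplit, setIntegral_union (Ioc_disjoint_Ioi le_rfl) measurableSet_Ioi hint hint2]
    have hzero : ∫ y in Ioc (-μ) μ, y * (1 + y ^ 2 / ν) ^ (-(ν + 1) / 2) = 0 := by
      rw [← intervalIntegral.integral_of_le (by linarith : -μ ≤ μ)]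
      exact odd_zero μ
    rw [hzero, zero_add]
    exact pos_part hν hμ

theorem stmt_15 (ν μ : ℝ) (hν : 1 < ν)
    (P : ℝ) (hP : P = ∫ x in Ioi (0:ℝ), C ν * (1 + (x - μ)^2 / ν) ^ (-(ν + 1) / 2)) :
    μ < ∫ x in Ioi (0:ℝ), x * (C ν * (1 + (x - μ)^2 / ν) ^ (-(ν + 1) / 2) / P) := by
  have hC := C_pos hν
  have hgpos : ∀ y : ℝ, 0 < (1 + y ^ 2 / ν) ^ (-(ν + 1) / 2) :=
    fun y => Real.rpow_pos_of_pos (base_pos hν y) _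
  -- integrabilities
  have hf_int : IntegrableOn (fun x : ℝ => C ν * (1 + (x - μ) ^ 2 / ν) ^ (-(ν + 1) / 2))
      (Ioi 0) := (((g_int hν).comp_sub_right μ).const_mul (C ν)).integrableOn
  have hyg := (yg_int hν).comp_sub_right μ
  have hxf_int : IntegrableOn (fun x : ℝ => x * (C ν * (1 + (x - μ) ^ 2 / ν) ^ (-(ν + 1) / 2)))
      (Ioi 0) := by
    have h2 : Integrable (fun x : ℝ =>
        (x - μ) * (1 + (x - μ) ^ 2 / ν) ^ (-(ν + 1) / 2)
          + μ * (1 + (x - μ) ^ 2 / ν) ^ (-(ν + 1) / 2)) :=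
      hyg.add (((g_int hν).comp_sub_right μ).const_mul μ)
    have h3 : Integrable (fun x : ℝ =>
        C ν * ((x - μ) * (1 + (x - μ) ^ 2 / ν) ^ (-(ν + 1) / 2)
          + μ * (1 + (x - μ) ^ 2 / ν) ^ (-(ν + 1) / 2))) := h2.const_mul (C ν)
    refine (h3.congr (Filter.Eventually.of_forall fun x => ?_)).integrableOn
    ring
  -- positivity of P
  have hPpos : 0 < P := by
    rw [hP]
    rw [setIntegral_pos_iff_support_of_nonneg_ae
      (ae_of_all _ fun x => by positivity) hf_int]
    have hsupp : Function.support
        (fun x : ℝ => C ν * (1 + (x - μ) ^ 2 / ν) ^ (-(ν + 1) / 2)) = univ :=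
      eq_univ_of_forall fun x => (by positivity :
        (0:ℝ) < C ν * (1 + (x - μ) ^ 2 / ν) ^ (-(ν + 1) / 2)).ne'
    rw [hsupp, univ_inter, Real.volume_Ioi]
    simp
  -- key: ∫ (x - μ) f > 0
  have key : 0 < ∫ x in Ioi (0:ℝ),
      (x - μ) * (C ν * (1 + (x - μ) ^ 2 / ν) ^ (-(ν + 1) / 2)) := by
    have e1 : ∫ x in Ioi (0:ℝ),
        (x - μ) * (C ν * (1 + (x - μ) ^ 2 / ν) ^ (-(ν + 1) / 2))
        = C ν * ∫ x in Ioi (0:ℝ), (x - μ) * (1 + (x - μ) ^ 2 / ν) ^ (-(ν + 1) / 2) := by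
      rw [← integral_const_mul]
      exact integral_congr_ae (Filter.Eventually.of_forall fun x => by ring)
    rw [e1, shift_int (fun y => y * (1 + y ^ 2 / ν) ^ (-(ν + 1) / 2)) μ]
    exact mul_pos hC (key_pos hν μ)
  -- assemble
  have e2 : ∫ x in Ioi (0:ℝ), x * (C ν * (1 + (x - μ) ^ 2 / ν) ^ (-(ν + 1) / 2) / P)
      = (∫ x in Ioi (0:ℝ), x * (C ν * (1 + (x - μ) ^ 2 / ν) ^ (-(ν + 1) / 2))) / P := by
    rw [← integral_div]
    exact integral_congr_ae (Filter.Eventually.of_forall fun x => by ring)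
  rw [e2, lt_div_iff₀ hPpos]
  have e4 := integral_sub hxf_int (hf_int.const_mul μ)
  have e5 : ∫ x in Ioi (0:ℝ), (x - μ) * (C ν * (1 + (x - μ) ^ 2 / ν) ^ (-(ν + 1) / 2))
      = ∫ x in Ioi (0:ℝ), (x * (C ν * (1 + (x - μ) ^ 2 / ν) ^ (-(ν + 1) / 2))
        - μ * (C ν * (1 + (x - μ) ^ 2 / ν) ^ (-(ν + 1) / 2))) :=
    integral_congr_ae (Filter.Eventually.of_forall fun x => by ring)
  have e6 : ∫ x in Ioi (0:ℝ), μ * (C ν * (1 + (x - μ) ^ 2 / ν) ^ (-(ν + 1) / 2))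
      = μ * ∫ x in Ioi (0:ℝ), C ν * (1 + (x - μ) ^ 2 / ν) ^ (-(ν + 1) / 2) :=
    integral_const_mul μ _
  rw [e5, e4, e6, ← hP] at key
  linarith
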